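/- The piecewise scalar system x'(t) = 0 for 0 ≤ t ≤ 1 and x'(t) = -2x(t) for t > 1, on Ω = (-1,1), is SO (contraction after small overshoot): for each ε > 0, setting ℓ = min{log(1+ε), 1}, we have |x(t₂,t₁,a) - x(t₂,t₁,b)| ≤ (1+ε) exp(-(t₂-t₁)ℓ) |a-b| for all t₂ ≥ t₁ ≥ 0 and a, b ∈ Ω. -/
import Mathlib


open Real Set

/-- Solution of the piecewise system `x' = 0` for `0 ≤ t ≤ 1`, `x' = -2x` for `t > 1`,
with `x(t₁) = a` (for `t ≥ t₁ ≥ 0`). -/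
noncomputable def sol (t t₁ a : ℝ) : ℝ :=
  if t₁ ≤ 1 then (if t ≤ 1 then a else Real.exp (-2 * (t - 1)) * a)
  else Real.exp (-2 * (t - t₁)) * a

/-- The piecewise system is SO (contraction after small overshoot): for each `ε > 0`,
with `ℓ = min (log(1+ε)) 1`, we have
`|x(t₂,t₁,a) - x(t₂,t₁,b)| ≤ (1+ε) exp(-(t₂-t₁)ℓ) |a-b|`
for all `t₂ ≥ t₁ ≥ 0` and all `a, b ∈ (-1,1)`. -/
theorem stmt5 (ε : ℝ) (hε : 0 < ε) :
    ∀ t₁ t₂ : ℝ, 0 ≤ t₁ → t₁ ≤ t₂ → ∀ a ∈ Ioo (-1 : ℝ) 1, ∀ b ∈ Ioo (-1 : ℝ) 1,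
      |sol t₂ t₁ a - sol t₂ t₁ b| ≤
        (1 + ε) * Real.exp (-(t₂ - t₁) * min (Real.log (1 + ε)) 1) * |a - b| := by
  intro t₁ t₂ ht₁ h12 a ha b hb
  set ℓ := min (Real.log (1 + ε)) 1 with hℓdef
  have hε1 : (0:ℝ) < 1 + ε := by linarith
  have hlog : 0 < Real.log (1 + ε) := Real.log_pos (by linarith)
  have hℓpos : 0 < ℓ := lt_min hlog one_pos
  have hℓ1 : ℓ ≤ 1 := min_le_right _ _
  have hℓlog : ℓ ≤ Real.log (1 + ε) := min_le_left _ _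
  have habs : 0 ≤ |a - b| := abs_nonneg _
  have key : ∀ K : ℝ, K ≤ (1 + ε) * Real.exp (-(t₂ - t₁) * ℓ) →
      K * |a - b| ≤ (1 + ε) * Real.exp (-(t₂ - t₁) * ℓ) * |a - b| :=
    fun K hK => mul_le_mul_of_nonneg_right hK habs
  unfold sol
  split_ifs with h1 h2
  · -- t₁ ≤ 1, t₂ ≤ 1 : constant solution
    have h1le : (1:ℝ) ≤ (1 + ε) * Real.exp (-(t₂ - t₁) * ℓ) := by
      have hx : Real.exp ((t₂ - t₁) * ℓ) ≤ 1 + ε := by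
        rw [← Real.exp_log hε1]
        apply Real.exp_le_exp.mpr
        nlinarith [mul_le_mul_of_nonneg_right (by linarith : t₂ - t₁ ≤ 1) hℓpos.le]
      calc (1:ℝ) = Real.exp ((t₂ - t₁) * ℓ) * Real.exp (-(t₂ - t₁) * ℓ) := by
            rw [← Real.exp_add]; ring_nf; exact Real.exp_zero.symm
        _ ≤ (1 + ε) * Real.exp (-(t₂ - t₁) * ℓ) :=
            mul_le_mul_of_nonneg_right hx (Real.exp_pos _).le
    calc |a - b| = 1 * |a - b| := (one_mul _).symm
      _ ≤ _ := key 1 h1le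
  · -- t₁ ≤ 1 < t₂
    rw [← mul_sub, abs_mul, abs_of_pos (Real.exp_pos _)]
    apply key
    have : Real.exp (-2 * (t₂ - 1)) ≤ (1 + ε) * Real.exp (-(t₂ - t₁) * ℓ) := by
      rw [← Real.exp_log hε1, ← Real.exp_add]
      apply Real.exp_le_exp.mpr
      have h2' : 1 < t₂ := lt_of_not_ge h2
      nlinarith [mul_le_mul_of_nonneg_left hℓ1 (by linarith : (0:ℝ) ≤ t₂ - 1),
        mul_le_mul_of_nonneg_right (by linarith : 1 - t₁ ≤ 1) hℓpos.le]
    exact this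
  · -- 1 < t₁
    rw [← mul_sub, abs_mul, abs_of_pos (Real.exp_pos _)]
    apply key
    rw [← Real.exp_log hε1, ← Real.exp_add]
    apply Real.exp_le_exp.mpr
    nlinarith [mul_le_mul_of_nonneg_left hℓ1 (by linarith : (0:ℝ) ≤ t₂ - t₁)]
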